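/- Let Φ : M_n → M_n be a linear map and let 1 ≤ k ≤ n. Then the following are equivalent: (i) for every m ≥ 1 and every positive semidefinite ρ ∈ M_m ⊗ M_n with SN(ρ) ≤ k, the matrix (id_m ⊗ Φ)(ρ) is positive semidefinite; (ii) Φ is k-positive. (This is Corollary 4.4(c): Φ : OMAX^k(M_n) → M_n is completely positive if and only if Φ is k-positive.) -/

import Mathlib

open scoped ComplexOrder Kronecker
open Matrix

noncomputable section

/-- The standard inner product `⟨v, w⟩ = ∑ conj(vᵢ) wᵢ` on `I → ℂ`. -/
def inprod {I : Type*} [Fintype I] (v w : I → ℂ) : ℂ :=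
  ∑ i, (starRingEnd ℂ) (v i) * w i

/-- `v` is a unit vector. -/
def UnitVec {I : Type*} [Fintype I] (v : I → ℂ) : Prop :=
  inprod v v = 1

/-- The Schmidt rank of a vector in `ℂ^I ⊗ ℂ^J`, i.e. the rank of the associated
`I × J` coefficient matrix. -/
noncomputable def SchmidtRank {I J : Type*} [Fintype I] [Fintype J] (v : I × J → ℂ) : ℕ :=
  (Matrix.of fun i j => v (i, j)).rank

/-- The operator norm (largest singular value) of a matrix, as
`sup { |⟨v, A w⟩| : v, w unit vectors }`. -/
noncomputable def opNorm {I J : Type*} [Fintype I] [Fintype J] (A : Matrix I J ℂ) : ℝ :=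
  sSup { t : ℝ | ∃ v w, UnitVec v ∧ UnitVec w ∧ t = ‖inprod v (A.mulVec w)‖ }

/-- The `S(k)`-norm of `X ∈ M_I ⊗ M_J`. -/
noncomputable def SNorm {I J : Type*} [Fintype I] [Fintype J] (k : ℕ)
    (X : Matrix (I × J) (I × J) ℂ) : ℝ :=
  sSup { t : ℝ | ∃ v w : I × J → ℂ, UnitVec v ∧ UnitVec w ∧
    SchmidtRank v ≤ k ∧ SchmidtRank w ≤ k ∧
    t = ‖inprod v (X.mulVec w)‖ }

/-- `X` is a `k`-block positive (Hermitian) operator: `⟨v, X v⟩ ≥ 0` for every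
vector of Schmidt rank at most `k`. -/
def kBlockPos {I J : Type*} [Fintype I] [Fintype J] (k : ℕ)
    (X : Matrix (I × J) (I × J) ℂ) : Prop :=
  X.IsHermitian ∧ ∀ v : I × J → ℂ, SchmidtRank v ≤ k → 0 ≤ inprod v (X.mulVec v)

/-- `ρ` has Schmidt number at most `k` (in particular it is positive semidefinite):
it is a finite nonnegative combination of rank-one projections onto vectors of
Schmidt rank at most `k`. -/
def SchmidtNumberLE {I J : Type*} [Fintype I] [Fintype J] (k : ℕ)
    (ρ : Matrix (I × J) (I × J) ℂ) : Prop :=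
  ∃ (N : ℕ) (c : Fin N → ℝ) (v : Fin N → (I × J → ℂ)),
    (∀ i, 0 ≤ c i) ∧ (∀ i, SchmidtRank (v i) ≤ k) ∧
    ρ = ∑ i, (c i : ℂ) • Matrix.vecMulVec (v i) (star (v i))

/-- `id_I ⊗ Φ` : the map applying `Φ` to the second tensor factor. -/
noncomputable def tensorId {I : Type*} [Fintype I] {a b : ℕ}
    (Φ : Matrix (Fin a) (Fin a) ℂ →ₗ[ℂ] Matrix (Fin b) (Fin b) ℂ)
    (X : Matrix (I × Fin a) (I × Fin a) ℂ) : Matrix (I × Fin b) (I × Fin b) ℂ :=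
  Matrix.of fun p q => Φ (Matrix.of fun s t => X (p.1, s) (q.1, t)) p.2 q.2

/-- The trace norm `‖X‖_tr = Tr √(X^* X)`. -/
noncomputable def trNorm {I : Type*} [Fintype I] [DecidableEq I] (X : Matrix I I ℂ) : ℝ :=
  (((Matrix.posSemidef_conjTranspose_mul_self X).1.eigenvectorUnitary : Matrix I I ℂ) *
    Matrix.diagonal ((fun r : ℝ => (r : ℂ)) ∘ (√·) ∘ (Matrix.posSemidef_conjTranspose_mul_self X).1.eigenvalues) *
    (star (Matrix.posSemidef_conjTranspose_mul_self X).1.eigenvectorUnitary : Matrix I I ℂ)).trace.re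

end

/-! A vector of Schmidt rank at most `k` in `ℂ^m ⊗ ℂ^n` has the form `(A ⊗ 1) w` with
`w ∈ ℂ^k ⊗ ℂ^n`: factor its `m × n` coefficient matrix through `ℂ^k`. Since `id ⊗ Φ` commutes
with conjugation by `A ⊗ 1`, it sends `v v*` to `(A ⊗ 1) ((id_k ⊗ Φ)(w w*)) (A ⊗ 1)*`, which is
positive when `Φ` is `k`-positive; by linearity the same holds for every state of Schmidt number
at most `k`. Conversely, every positive matrix on `ℂ^k ⊗ ℂ^n` has Schmidt number at most `k`. -/

theorem Matrix.exists_eq_mul_of_rank_le {K m n : Type*} [Field K] [Fintype m] [Fintype n]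
    [DecidableEq n] {k : ℕ} (M : Matrix m n K) (hM : M.rank ≤ k) :
    ∃ (A : Matrix m (Fin k) K) (W : Matrix (Fin k) n K), M = A * W := by
  classical
  obtain ⟨g, hg⟩ : ∃ g : LinearMap.range M.mulVecLin →ₗ[K] (Fin k → K), Function.Injective g :=
    finrank_le_iff_exists_linearMap.mp (by simpa [Matrix.rank] using hM)
  obtain ⟨r, hr⟩ := g.exists_leftInverse_of_injective (LinearMap.ker_eq_bot.mpr hg)
  refine ⟨LinearMap.toMatrix' ((LinearMap.range M.mulVecLin).subtype ∘ₗ r),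
    LinearMap.toMatrix' (g ∘ₗ M.mulVecLin.rangeRestrict), ?_⟩
  rw [← LinearMap.toMatrix'_comp, LinearMap.comp_assoc, ← LinearMap.comp_assoc _ g, hr,
    LinearMap.id_comp, LinearMap.rangeRestrict, LinearMap.subtype_comp_codRestrict,
    ← Matrix.toLin'_apply', LinearMap.toMatrix'_toLin']

theorem SchmidtRank.le_card_left {I J : Type*} [Fintype I] [Fintype J] (v : I × J → ℂ) :
    SchmidtRank v ≤ Fintype.card I :=
  rank_le_card_height _

theorem exists_eq_kronecker_one_mulVec_of_schmidtRank_le {I J : Type*} [Fintype I] [Fintype J]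
    [DecidableEq J] {k : ℕ} {v : I × J → ℂ} (hv : SchmidtRank v ≤ k) :
    ∃ (A : Matrix I (Fin k) ℂ) (w : Fin k × J → ℂ), v = (A ⊗ₖ (1 : Matrix J J ℂ)) *ᵥ w := by
  obtain ⟨A, W, hAW⟩ := (of fun i j => v (i, j)).exists_eq_mul_of_rank_le hv
  refine ⟨A, fun p => W p.1 p.2, funext fun ⟨i, j⟩ => ?_⟩
  simpa [mulVec, dotProduct, Fintype.sum_prod_type, one_apply, mul_apply] using
    congr_fun₂ hAW i j

theorem schmidtNumberLE_card_left_of_posSemidef {I J : Type*} [Fintype I] [Fintype J]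
    {X : Matrix (I × J) (I × J) ℂ} (hX : X.PosSemidef) :
    SchmidtNumberLE (Fintype.card I) X := by
  obtain ⟨N, v, rfl⟩ := posSemidef_iff_eq_sum_vecMulVec.mp hX
  exact ⟨N, fun _ => 1, v, fun _ => zero_le_one, fun i => SchmidtRank.le_card_left (v i), by simp⟩

theorem kronecker_one_mul_mul_conjTranspose_submatrix {R I K J : Type*} [CommSemiring R] [StarRing R]
    [Fintype K] [Fintype J] [DecidableEq J] (A : Matrix I K R) (Y : Matrix (K × J) (K × J) R)
    (i j : I) :
    ((A ⊗ₖ (1 : Matrix J J R)) * Y * (A ⊗ₖ (1 : Matrix J J R))ᴴ).submatrix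
        (Prod.mk i) (Prod.mk j)
      = ∑ a, ∑ b, (A i a * star (A j b)) • Y.submatrix (Prod.mk a) (Prod.mk b) := by
  ext s t
  simp only [submatrix_apply, mul_apply, conjTranspose_apply, kroneckerMap_apply,
    Fintype.sum_prod_type, one_apply, mul_ite, ite_mul, mul_one, mul_zero, zero_mul, star_zero,
    apply_ite (star : R → R), Finset.sum_ite_eq, Finset.mem_univ, if_true, Finset.sum_mul,
    Matrix.sum_apply, Matrix.smul_apply, smul_eq_mul]
  rw [Finset.sum_comm]
  refine Finset.sum_congr rfl fun b _ => Finset.sum_congr rfl fun a _ => ?_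
  ring

section tensorId

variable {I : Type*} [Fintype I] {a b : ℕ}
  (Φ : Matrix (Fin a) (Fin a) ℂ →ₗ[ℂ] Matrix (Fin b) (Fin b) ℂ)

theorem tensorId_apply (X : Matrix (I × Fin a) (I × Fin a) ℂ) (p q : I × Fin b) :
    tensorId Φ X p q = Φ (X.submatrix (Prod.mk p.1) (Prod.mk q.1)) p.2 q.2 :=
  rfl

noncomputable def tensorIdLinearMap :
    Matrix (I × Fin a) (I × Fin a) ℂ →ₗ[ℂ] Matrix (I × Fin b) (I × Fin b) ℂ where
  toFun := tensorId Φ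
  map_add' X Y := by
    ext p q
    simp only [tensorId_apply, submatrix_add, Pi.add_apply, map_add, Matrix.add_apply]
  map_smul' c X := by
    ext p q
    simp only [tensorId_apply, submatrix_smul, Pi.smul_apply, map_smul, Matrix.smul_apply,
      RingHom.id_apply]

theorem tensorId_kronecker_one_conj {K : Type*} [Fintype K] (A : Matrix I K ℂ)
    (X : Matrix (K × Fin a) (K × Fin a) ℂ) :
    tensorId Φ ((A ⊗ₖ (1 : Matrix (Fin a) (Fin a) ℂ)) * X
        * (A ⊗ₖ (1 : Matrix (Fin a) (Fin a) ℂ))ᴴ)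
      = (A ⊗ₖ (1 : Matrix (Fin b) (Fin b) ℂ)) * tensorId Φ X
          * (A ⊗ₖ (1 : Matrix (Fin b) (Fin b) ℂ))ᴴ := by
  ext p q
  change _ = ((A ⊗ₖ (1 : Matrix (Fin b) (Fin b) ℂ)) * tensorId Φ X
    * (A ⊗ₖ (1 : Matrix (Fin b) (Fin b) ℂ))ᴴ).submatrix (Prod.mk p.1) (Prod.mk q.1) p.2 q.2
  rw [tensorId_apply, kronecker_one_mul_mul_conjTranspose_submatrix,
    kronecker_one_mul_mul_conjTranspose_submatrix]
  simp only [map_sum, map_smul, Matrix.sum_apply, Matrix.smul_apply, submatrix_apply,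
    tensorId_apply]

variable {Φ} {k : ℕ}

theorem posSemidef_tensorId_vecMulVec_of_schmidtRank_le
    (hΦ : ∀ X : Matrix (Fin k × Fin a) (Fin k × Fin a) ℂ,
      X.PosSemidef → (tensorId Φ X).PosSemidef) {v : I × Fin a → ℂ}
    (hv : SchmidtRank v ≤ k) : (tensorId Φ (vecMulVec v (star v))).PosSemidef := by
  obtain ⟨A, w, rfl⟩ := exists_eq_kronecker_one_mulVec_of_schmidtRank_le hv
  rw [star_mulVec, ← vecMulVec_mul, ← mul_vecMulVec, tensorId_kronecker_one_conj]
  exact (hΦ _ (posSemidef_vecMulVec_self_star w)).mul_mul_conjTranspose_same _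

theorem posSemidef_tensorId_of_schmidtNumberLE
    (hΦ : ∀ X : Matrix (Fin k × Fin a) (Fin k × Fin a) ℂ,
      X.PosSemidef → (tensorId Φ X).PosSemidef) {ρ : Matrix (I × Fin a) (I × Fin a) ℂ}
    (hρ : SchmidtNumberLE k ρ) : (tensorId Φ ρ).PosSemidef := by
  obtain ⟨N, c, v, hc, hv, rfl⟩ := hρ
  change (tensorIdLinearMap Φ _).PosSemidef
  simp only [map_sum, map_smul]
  exact posSemidef_sum _ fun i _ =>
    (posSemidef_tensorId_vecMulVec_of_schmidtRank_le hΦ (hv i)).smul (by exact_mod_cast hc i)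

end tensorId

theorem cp_on_kSuperMaximal_iff_kPositive_general (n k : ℕ) (hk : 1 ≤ k)
    (Φ : Matrix (Fin n) (Fin n) ℂ →ₗ[ℂ] Matrix (Fin n) (Fin n) ℂ) :
    (∀ (m : ℕ), 0 < m → ∀ ρ : Matrix (Fin m × Fin n) (Fin m × Fin n) ℂ,
        ρ.PosSemidef → SchmidtNumberLE k ρ → (tensorId Φ ρ).PosSemidef)
      ↔ (∀ X : Matrix (Fin k × Fin n) (Fin k × Fin n) ℂ,
          X.PosSemidef → (tensorId Φ X).PosSemidef) := by
  refine ⟨fun h X hX => h k hk X hX ?_, fun hΦ m _ ρ _ hρ =>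
    posSemidef_tensorId_of_schmidtNumberLE hΦ hρ⟩
  simpa using schmidtNumberLE_card_left_of_posSemidef hX

/-- Corollary 4.4(c): `Φ : OMAX^k(M_n) → M_n` is completely positive iff `Φ` is `k`-positive. -/
theorem cp_on_kSuperMaximal_iff_kPositive (n k : ℕ) (hk : 1 ≤ k) (hkn : k ≤ n)
    (Φ : Matrix (Fin n) (Fin n) ℂ →ₗ[ℂ] Matrix (Fin n) (Fin n) ℂ) :
    (∀ (m : ℕ), 0 < m → ∀ ρ : Matrix (Fin m × Fin n) (Fin m × Fin n) ℂ,
        ρ.PosSemidef → SchmidtNumberLE k ρ → (tensorId Φ ρ).PosSemidef)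
      ↔ (∀ X : Matrix (Fin k × Fin n) (Fin k × Fin n) ℂ,
          X.PosSemidef → (tensorId Φ X).PosSemidef) :=
  cp_on_kSuperMaximal_iff_kPositive_general n k hk Φ
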